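/- arXiv:2401.07317 — 2 statements merged into one kernel-verified Lean document; each statement's English description precedes it below -/
import Mathlib

section
/- For all x, y ∈ ℝⁿ and α ∈ ℝ, the limit inner product ⟨x,y⟩_∞ := ⊞_{i∈[n]} x_i y_i satisfies: (i) ⟨x,x⟩_∞ = ‖x‖_∞², i.e. √(⟨x,x⟩_∞) = ‖x‖_∞; (ii) |⟨x,y⟩_∞| ≤ ‖x‖_∞ ‖y‖_∞; (iii) α ⟨x,y⟩_∞ = ⟨αx, y⟩_∞ = ⟨x, αy⟩_∞. -/
open Filter Finset

/-- The binary idempotent operation `⊞`. -/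
noncomputable def bop (a b : ℝ) : ℝ :=
  if |b| < |a| then a else if |a| < |b| then b else (a + b) / 2

/-- The unique real `(2p+1)`-th root of `t`. -/
noncomputable def oddRoot (p : ℕ) (t : ℝ) : ℝ :=
  Real.sign t * |t| ^ ((1 : ℝ) / (2 * (p : ℝ) + 1))

/-- `ξ_I[u](α) = Card{i ∈ I : u i = α} − Card{i ∈ I : u i = −α}`. -/
noncomputable def xiMap {ι : Type*} (I : Finset ι) (u : ι → ℝ) (α : ℝ) : ℤ :=
  ((I.filter fun i => u i = α).card : ℤ) - ((I.filter fun i => u i = -α).card : ℤ)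

/-- The residual index set `J_I(u)`. -/
noncomputable def resid {ι : Type*} (I : Finset ι) (u : ι → ℝ) : Finset ι :=
  I.filter fun i => xiMap I u (u i) ≠ 0

/-- The `n`-ary extension `⊞_{i ∈ I} u i` of the binary operation `⊞`. -/
noncomputable def Fop {ι : Type*} (I : Finset ι) (u : ι → ℝ) : ℝ :=
  if h : (resid I u).Nonempty then
    if 0 < xiMap I u ((resid I u).sup' h fun i => |u i|) then (resid I u).sup' h u
    else if xiMap I u ((resid I u).sup' h fun i => |u i|) < 0 then (resid I u).inf' h u
    else 0
  else 0

/-- The Chebyshev norm `max_{i ∈ [n]} |x i|`. -/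
noncomputable def chebNorm {n : ℕ} (x : Fin n → ℝ) : ℝ := ⨆ i, |x i|

/-- The ultrametric distance `d_⊞(x,y) = max_i |x_i ⊟ y_i|`. -/
noncomputable def dB {n : ℕ} (x y : Fin n → ℝ) : ℝ := ⨆ i, |bop (x i) (-(y i))|

/-!
The operation `⊞` returns either `0` or one of its arguments, which bounds `|⟨x,y⟩_∞|` by
the largest `|x_i y_i|`. Scaling all arguments by `α ≠ 0` keeps the residual index set and rescales
the extremal modulus, while the sign of `ξ` there is kept for `α > 0` and flipped for `α < 0`;
so `⊞` is homogeneous. For nonnegative arguments nothing cancels (`ξ[u](u_i) > 0` whenever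
`u_i > 0`), so `⊞` is the maximum, and `⟨x,x⟩_∞ = max_i x_i² = ‖x‖_∞²`.
-/

namespace Finset

variable {α ι : Type*} [AddCommGroup α] [LinearOrder α] [IsOrderedAddMonoid α] {s : Finset ι}

lemma inf'_neg_eq_neg_sup' (hs : s.Nonempty) (f : ι → α) :
    (s.inf' hs fun i => -f i) = -s.sup' hs f := by
  obtain ⟨i, hi, he⟩ := exists_mem_eq_sup' hs f
  exact le_antisymm (he ▸ inf'_le (fun i => -f i) hi)
    (le_inf' _ _ fun j hj => neg_le_neg (le_sup' f hj))

lemma sup'_neg_eq_neg_inf' (hs : s.Nonempty) (f : ι → α) :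
    (s.sup' hs fun i => -f i) = -s.inf' hs f := by
  rw [← neg_neg (s.sup' hs _), ← inf'_neg_eq_neg_sup']
  simp only [neg_neg]

end Finset

section Fop

variable {ι : Type*} {I : Finset ι} {u : ι → ℝ}

lemma Fop_eq_zero_or_exists_mem (I : Finset ι) (u : ι → ℝ) :
    Fop I u = 0 ∨ ∃ i ∈ I, Fop I u = u i := by
  unfold Fop
  split_ifs with hJ
  · obtain ⟨i, hi, he⟩ := exists_mem_eq_sup' hJ u
    exact .inr ⟨i, mem_of_mem_filter i hi, he⟩
  · obtain ⟨i, hi, he⟩ := exists_mem_eq_inf' hJ u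
    exact .inr ⟨i, mem_of_mem_filter i hi, he⟩
  all_goals exact .inl rfl

lemma abs_Fop_le {b : ℝ} (hb : 0 ≤ b) (h : ∀ i ∈ I, |u i| ≤ b) : |Fop I u| ≤ b := by
  rcases Fop_eq_zero_or_exists_mem I u with h0 | ⟨i, hi, he⟩
  · simpa [h0] using hb
  · exact he ▸ h i hi

lemma xiMap_neg (c : ℝ) : xiMap I (fun i => -u i) c = -xiMap I u c := by
  simp only [xiMap, neg_eq_iff_eq_neg, neg_neg]
  ring

lemma xiMap_neg_neg (c : ℝ) : xiMap I (fun i => -u i) (-c) = xiMap I u c := by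
  simp only [xiMap, neg_inj]

lemma xiMap_const_mul {α : ℝ} (hα : α ≠ 0) (c : ℝ) :
    xiMap I (fun i => α * u i) (α * c) = xiMap I u c := by
  simp only [xiMap, ← mul_neg, mul_right_inj' hα]

lemma resid_neg : resid I (fun i => -u i) = resid I u :=
  filter_congr fun i _ => by rw [xiMap_neg_neg]

lemma resid_const_mul {α : ℝ} (hα : α ≠ 0) : resid I (fun i => α * u i) = resid I u :=
  filter_congr fun i _ => by rw [xiMap_const_mul hα]

lemma Fop_neg : Fop I (fun i => -u i) = -Fop I u := by
  by_cases hJ : (resid I u).Nonempty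
  · rw [Fop, Fop, resid_neg, dif_pos hJ, dif_pos hJ]
    simp only [abs_neg]
    generalize ((resid I u).sup' hJ fun i => |u i|) = M
    rw [xiMap_neg, sup'_neg_eq_neg_inf', inf'_neg_eq_neg_sup']
    rcases lt_trichotomy (xiMap I u M) 0 with h | h | h
    · simp [h, h.not_gt]
    · simp [h]
    · simp [h, h.not_gt]
  · rw [Fop, Fop, resid_neg, dif_neg hJ, dif_neg hJ, neg_zero]

lemma Fop_zero : Fop I (fun _ => 0) = 0 := by
  have h := Fop_neg (I := I) (u := fun _ => 0)
  simp only [neg_zero] at h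
  linarith

lemma Fop_const_mul_of_pos {α : ℝ} (hα : 0 < α) :
    Fop I (fun i => α * u i) = α * Fop I u := by
  by_cases hJ : (resid I u).Nonempty
  · rw [Fop, Fop, resid_const_mul hα.ne', dif_pos hJ, dif_pos hJ]
    have habs : ((resid I u).sup' hJ fun i => |α * u i|)
        = α * (resid I u).sup' hJ fun i => |u i| := by
      simp only [abs_mul, abs_of_pos hα]
      exact (mul₀_sup' hα.le _ _ _).symm
    have hinf : ((resid I u).inf' hJ fun i => α * u i) = α * (resid I u).inf' hJ u :=
      (apply_inf'_eq_inf'_comp hJ (α * ·) fun a b => mul_min_of_nonneg a b hα.le).symm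
    rw [habs, xiMap_const_mul hα.ne', ← mul₀_sup' hα.le, hinf]
    split_ifs <;> ring
  · rw [Fop, Fop, resid_const_mul hα.ne', dif_neg hJ, dif_neg hJ, mul_zero]

lemma Fop_const_mul (α : ℝ) : Fop I (fun i => α * u i) = α * Fop I u := by
  rcases lt_trichotomy α 0 with hα | rfl | hα
  · have h : (fun i => α * u i) = fun i => -(-α * u i) := by simp
    rw [h, Fop_neg, Fop_const_mul_of_pos (neg_pos.2 hα)]
    ring
  · simp only [zero_mul]
    exact Fop_zero
  · exact Fop_const_mul_of_pos hα

lemma xiMap_pos_of_nonneg (hu : ∀ j ∈ I, 0 ≤ u j) {i : ι} (hi : i ∈ I) (hpos : 0 < u i) :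
    0 < xiMap I u (u i) := by
  have hneg : I.filter (fun j => u j = -u i) = ∅ :=
    filter_eq_empty_iff.2 fun j hj he => by linarith [hu j hj]
  have hcard : 0 < (I.filter fun j => u j = u i).card :=
    card_pos.2 ⟨i, mem_filter.2 ⟨hi, rfl⟩⟩
  rw [xiMap, hneg, card_empty, Nat.cast_zero, sub_zero]
  exact_mod_cast hcard

lemma Fop_nonneg_of_nonneg (hu : ∀ i ∈ I, 0 ≤ u i) : 0 ≤ Fop I u := by
  rcases Fop_eq_zero_or_exists_mem I u with h0 | ⟨i, hi, he⟩
  · exact h0.ge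
  · exact he ▸ hu i hi

lemma le_Fop_of_nonneg (hu : ∀ j ∈ I, 0 ≤ u j) {i : ι} (hi : i ∈ I) : u i ≤ Fop I u := by
  obtain h0 | hpos := (hu i hi).eq_or_lt
  · exact h0 ▸ Fop_nonneg_of_nonneg hu
  have hiJ : i ∈ resid I u := mem_filter.2 ⟨hi, (xiMap_pos_of_nonneg hu hi hpos).ne'⟩
  have hJ : (resid I u).Nonempty := ⟨i, hiJ⟩
  have hJI : resid I u ⊆ I := filter_subset _ _
  have habs : (resid I u).sup' hJ (fun j => |u j|) = (resid I u).sup' hJ u :=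
    sup'_congr hJ rfl fun j hj => abs_of_nonneg (hu j (hJI hj))
  have hle : u i ≤ (resid I u).sup' hJ u := le_sup' u hiJ
  obtain ⟨k, hk, hkM⟩ := exists_mem_eq_sup' hJ u
  have hxi : 0 < xiMap I u ((resid I u).sup' hJ u) := by
    rw [hkM] at hle ⊢
    exact xiMap_pos_of_nonneg hu (hJI hk) (hpos.trans_le hle)
  rw [Fop, dif_pos hJ, habs, if_pos hxi]
  exact hle

end Fop

section chebNorm

variable {n : ℕ}

lemma chebNorm_nonneg (x : Fin n → ℝ) : 0 ≤ chebNorm x :=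
  Real.iSup_nonneg fun _ => abs_nonneg _

lemma abs_le_chebNorm (x : Fin n → ℝ) (i : Fin n) : |x i| ≤ chebNorm x :=
  le_ciSup (f := fun j => |x j|) (Set.finite_range _).bddAbove i

lemma abs_Fop_mul_le_chebNorm_mul (x y : Fin n → ℝ) :
    |Fop univ (fun i => x i * y i)| ≤ chebNorm x * chebNorm y :=
  abs_Fop_le (mul_nonneg (chebNorm_nonneg x) (chebNorm_nonneg y)) fun i _ => by
    rw [abs_mul]
    exact mul_le_mul (abs_le_chebNorm x i) (abs_le_chebNorm y i) (abs_nonneg _)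
      (chebNorm_nonneg x)

lemma Fop_mul_self_eq_chebNorm_sq (x : Fin n → ℝ) :
    Fop univ (fun i => x i * x i) = chebNorm x ^ 2 := by
  have hu : ∀ i ∈ univ, 0 ≤ x i * x i := fun i _ => mul_self_nonneg (x i)
  refine le_antisymm ?_ ?_
  · simpa [sq] using (le_abs_self _).trans (abs_Fop_mul_le_chebNorm_mul x x)
  · rcases isEmpty_or_nonempty (Fin n) with hn | hn
    · simpa [chebNorm] using Fop_nonneg_of_nonneg hu
    · obtain ⟨i, hi⟩ := exists_eq_ciSup_of_finite (f := fun i => |x i|)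
      rw [chebNorm, ← hi, sq_abs, sq]
      exact le_Fop_of_nonneg hu (mem_univ i)

end chebNorm

/-- properties of the limit inner product `⟨x,y⟩_∞ = ⊞_i x_i y_i`. -/
theorem stmt3 (n : ℕ) (x y : Fin n → ℝ) (α : ℝ) :
    (Fop Finset.univ (fun i => x i * x i) = chebNorm x ^ 2 ∧
      Real.sqrt (Fop Finset.univ (fun i => x i * x i)) = chebNorm x) ∧
    |Fop Finset.univ (fun i => x i * y i)| ≤ chebNorm x * chebNorm y ∧
    (α * Fop Finset.univ (fun i => x i * y i)
        = Fop Finset.univ (fun i => (α * x i) * y i) ∧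
      α * Fop Finset.univ (fun i => x i * y i)
        = Fop Finset.univ (fun i => x i * (α * y i))) := by
  have hsq := Fop_mul_self_eq_chebNorm_sq x
  refine ⟨⟨hsq, by rw [hsq, Real.sqrt_sq (chebNorm_nonneg x)]⟩,
    abs_Fop_mul_le_chebNorm_mul x y, ?_, ?_⟩
  · simp_rw [mul_assoc]
    exact (Fop_const_mul α).symm
  · simp_rw [mul_left_comm (x _) α]
    exact (Fop_const_mul α).symm
end

section
/- For a subset Y of ℝⁿ, the following are equivalent: (a) for all x, y ∈ Y and all t ∈ ℝ, x ⊞ t·y ∈ Y (Y is an idempotent symmetric subspace); (b) for every m ≥ 1, all x⁽¹⁾,…,x⁽ᵐ⁾ ∈ Y and all t ∈ ℝᵐ, the coordinatewise m-ary combination ⊞_{i∈[m]} t_i x⁽ⁱ⁾ belongs to Y. -/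
open Filter Finset

/-! Write `r = ⊞_{i∈I} u_i`. For each `i ∈ I` the value `(⊞_{j∈I∖i} u_j) ⊞ u_i` is either `r` or
`0`, and it is `r` whenever `u_i = r`; such an `i` exists when `r ≠ 0`, because `ξ(r) > 0`. On the
pair `{0, r}` the operation `⊞` behaves like "or", so applying binary `⊞` successively to these
values recovers `r`. Done coordinatewise with vectors that lie in `Y` by induction on `I`, this
gives (a) ⇒ (b); conversely the case `m = 2`, `t = (1, t)` of (b) is (a). -/

lemma bop_eq_left {a b : ℝ} (h : |b| < |a|) : bop a b = a := if_pos h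

lemma bop_eq_right {a b : ℝ} (h : |a| < |b|) : bop a b = b := by
  rw [bop, if_neg h.not_gt, if_pos h]

lemma bop_self (a : ℝ) : bop a a = a := by
  simp [bop]

lemma bop_neg_self (a : ℝ) : bop a (-a) = 0 := by
  simp [bop]

lemma neg_bop_self (a : ℝ) : bop (-a) a = 0 := by
  simp [bop]

lemma bop_zero_left (a : ℝ) : bop 0 a = a := by
  rcases eq_or_ne a 0 with rfl | h
  · exact bop_self 0
  · exact bop_eq_right (by simpa using h)

lemma bop_zero_right (a : ℝ) : bop a 0 = a := by
  rcases eq_or_ne a 0 with rfl | h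
  · exact bop_self 0
  · exact bop_eq_left (by simpa using h)

section Xi

variable {ι : Type*}

lemma xiMap_eq_sum (I : Finset ι) (u : ι → ℝ) (α : ℝ) :
    xiMap I u α = ∑ i ∈ I, ((if u i = α then 1 else 0) - (if u i = -α then 1 else 0) : ℤ) := by
  simp only [xiMap, card_filter, sum_sub_distrib, Nat.cast_sum, Nat.cast_ite, Nat.cast_one,
    Nat.cast_zero]

lemma xiMap_neg_s4 (I : Finset ι) (u : ι → ℝ) (α : ℝ) : xiMap I u (-α) = -xiMap I u α := by
  simp only [xiMap, neg_neg, neg_sub]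

lemma exists_eq_of_xiMap_pos {I : Finset ι} {u : ι → ℝ} {α : ℝ} (h : 0 < xiMap I u α) :
    ∃ i ∈ I, u i = α := by
  have : 0 < (I.filter fun i => u i = α).card := by unfold xiMap at h; omega
  exact filter_nonempty_iff.mp (card_pos.mp this)

lemma xiMap_eq_zero_of_forall_abs_ne {I : Finset ι} {u : ι → ℝ} {α : ℝ}
    (h : ∀ i ∈ I, |u i| ≠ |α|) : xiMap I u α = 0 := by
  rw [xiMap_eq_sum]
  refine sum_eq_zero fun i hi => ?_
  have h₁ : u i ≠ α := fun h' => h i hi (by rw [h'])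
  have h₂ : u i ≠ -α := fun h' => h i hi (by rw [h', abs_neg])
  simp [h₁, h₂]

lemma exists_mem_resid_of_xiMap_ne_zero {I : Finset ι} {u : ι → ℝ} {α : ℝ}
    (h : xiMap I u α ≠ 0) : ∃ i ∈ resid I u, |u i| = |α| := by
  obtain ⟨i, hi, hα⟩ : ∃ i ∈ I, |u i| = |α| := by
    by_contra! h'
    exact h (xiMap_eq_zero_of_forall_abs_ne h')
  refine ⟨i, mem_filter.mpr ⟨hi, ?_⟩, hα⟩
  rcases abs_eq_abs.mp hα with hα | hα <;> simpa [hα, xiMap_neg_s4] using h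

variable [DecidableEq ι]

lemma xiMap_erase {I : Finset ι} {i : ι} (hi : i ∈ I) (u : ι → ℝ) (α : ℝ) :
    xiMap (I.erase i) u α =
      xiMap I u α - (if u i = α then 1 else 0) + (if u i = -α then 1 else 0) := by
  rw [xiMap_eq_sum, xiMap_eq_sum, sum_erase_eq_sub hi]
  ring

lemma xiMap_erase_of_abs_ne {I : Finset ι} {i : ι} (hi : i ∈ I) {u : ι → ℝ} {α : ℝ}
    (h : |u i| ≠ |α|) : xiMap (I.erase i) u α = xiMap I u α := by
  have h₁ : u i ≠ α := fun h' => h (by rw [h'])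
  have h₂ : u i ≠ -α := fun h' => h (by rw [h', abs_neg])
  simp [xiMap_erase hi, h₁, h₂]

end Xi

/-- `Fop I u = r` exactly when `IsDominant (xiMap I u) r` (see `fop_eq_of_isDominant`). -/
def IsDominant (ξ : ℝ → ℤ) (r : ℝ) : Prop :=
  (∀ α, |r| < |α| → ξ α = 0) ∧ (r = 0 ∨ 0 < ξ r)

namespace IsDominant

variable {ξ : ℝ → ℤ} {r r' : ℝ}

lemma abs_lt (hr : IsDominant ξ r) {β : ℝ} (hβ : β ≠ 0) (h : ∀ α, |β| ≤ |α| → ξ α = 0) :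
    |r| < |β| := by
  by_contra! hle
  rcases hr.2 with rfl | hpos
  · exact hβ (abs_nonpos_iff.mp (by simpa using hle))
  · exact hpos.ne' (h r hle)

lemma abs_le (hr : IsDominant ξ r) (hr' : IsDominant ξ r') : |r| ≤ |r'| := by
  by_contra! hlt
  rcases hr.2 with rfl | hpos
  · exact (abs_nonneg r').not_gt (by simpa using hlt)
  · exact hpos.ne' (hr'.1 r hlt)

lemma eq (hodd : ∀ α, ξ (-α) = -ξ α) (hr : IsDominant ξ r) (hr' : IsDominant ξ r') :
    r = r' := by
  rcases abs_eq_abs.mp ((hr.abs_le hr').antisymm (hr'.abs_le hr)) with h | rfl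
  · exact h
  rcases hr.2 with h0 | hpos
  · linarith
  rcases hr'.2 with h0 | hpos'
  · linarith
  rw [hodd] at hpos
  omega

end IsDominant

section Fop

variable {ι : Type*}

lemma isDominant_fop (I : Finset ι) (u : ι → ℝ) : IsDominant (xiMap I u) (Fop I u) := by
  unfold Fop
  by_cases hJ : (resid I u).Nonempty
  swap
  · rw [dif_neg hJ]
    refine ⟨fun α _ => ?_, Or.inl rfl⟩
    by_contra hα
    obtain ⟨i, hi, -⟩ := exists_mem_resid_of_xiMap_ne_zero hα
    exact hJ ⟨i, hi⟩
  rw [dif_pos hJ]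
  obtain ⟨j, hj, hjM⟩ := exists_mem_eq_sup' hJ fun i => |u i|
  set M := (resid I u).sup' hJ fun i => |u i|
  have hle : ∀ i ∈ resid I u, |u i| ≤ M := fun i hi => le_sup' (fun i => |u i|) hi
  have hM : |M| = M := abs_of_nonneg ((abs_nonneg (u j)).trans (hle j hj))
  have hdom : ∀ ρ, |ρ| = M → 0 < xiMap I u ρ → IsDominant (xiMap I u) ρ := by
    refine fun ρ hρ hpos => ⟨fun α hα => ?_, Or.inr hpos⟩
    by_contra hα'
    obtain ⟨i, hi, hiα⟩ := exists_mem_resid_of_xiMap_ne_zero hα'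
    linarith [hle i hi]
  have hmem : ∀ ρ, 0 < xiMap I u ρ → ∃ i ∈ resid I u, u i = ρ := fun ρ hρ => by
    obtain ⟨i, hi, rfl⟩ := exists_eq_of_xiMap_pos hρ
    exact ⟨i, mem_filter.mpr ⟨hi, hρ.ne'⟩, rfl⟩
  split_ifs with hpos hneg
  · have hsup : (resid I u).sup' hJ u = M := by
      refine le_antisymm (sup'_le _ _ fun i hi => (le_abs_self _).trans (hle i hi)) ?_
      obtain ⟨i, hi, hiM⟩ := hmem M hpos
      exact hiM ▸ le_sup' u hi
    rw [hsup]
    exact hdom M hM hpos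
  · have hneg' : 0 < xiMap I u (-M) := by rw [xiMap_neg_s4]; omega
    have hinf : (resid I u).inf' hJ u = -M := by
      refine le_antisymm ?_ (le_inf' _ _ fun i hi => (neg_le_neg (hle i hi)).trans (neg_abs_le _))
      obtain ⟨i, hi, hiM⟩ := hmem (-M) hneg'
      exact hiM ▸ inf'_le u hi
    rw [hinf]
    exact hdom (-M) (by rw [abs_neg, hM]) hneg'
  · have hξM : xiMap I u M = 0 := by omega
    refine absurd ?_ (mem_filter.mp hj).2
    rcases abs_eq_abs.mp (hjM.symm.trans hM.symm) with h | h <;> simp [h, xiMap_neg_s4, hξM]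

lemma fop_eq_of_isDominant {I : Finset ι} {u : ι → ℝ} {r : ℝ} (h : IsDominant (xiMap I u) r) :
    Fop I u = r :=
  (isDominant_fop I u).eq (xiMap_neg_s4 I u) h

end Fop

section Erase

variable {ι : Type*} [DecidableEq ι] {I : Finset ι} {i : ι}

lemma fop_erase_eq_of_abs_le (hi : i ∈ I) (u : ι → ℝ) (hle : |u i| ≤ |Fop I u|)
    (hpos : Fop I u = 0 ∨ 0 < xiMap (I.erase i) u (Fop I u)) :
    Fop (I.erase i) u = Fop I u :=
  fop_eq_of_isDominant ⟨fun α hα => by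
    rw [xiMap_erase_of_abs_ne hi (hle.trans_lt hα).ne, (isDominant_fop I u).1 α hα], hpos⟩

lemma abs_fop_erase_lt (hi : i ∈ I) {u : ι → ℝ} (hur : u i = Fop I u) (hr : Fop I u ≠ 0)
    (hξ : xiMap (I.erase i) u (Fop I u) = 0) : |Fop (I.erase i) u| < |Fop I u| := by
  refine (isDominant_fop _ u).abs_lt hr fun α hα => ?_
  rcases hα.lt_or_eq with hα | hα
  · rw [xiMap_erase_of_abs_ne hi (hur ▸ hα.ne), (isDominant_fop I u).1 α hα]
  · rcases abs_eq_abs.mp hα with h | h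
    · rwa [← h]
    · rw [show α = -Fop I u by linarith, xiMap_neg_s4, hξ, neg_zero]

lemma bop_fop_erase (hi : i ∈ I) (u : ι → ℝ) :
    bop (Fop (I.erase i) u) (u i) = Fop I u ∨
      (bop (Fop (I.erase i) u) (u i) = 0 ∧ u i ≠ Fop I u) := by
  have hr := isDominant_fop I u
  rcases lt_or_ge |Fop I u| |u i| with hgt | hle
  · -- `u i` is cancelled in `I`, so without it `-u i` is left uncancelled on top
    have hui : u i ≠ 0 := abs_pos.mp ((abs_nonneg _).trans_lt hgt)
    have hg : Fop (I.erase i) u = -u i := by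
      refine fop_eq_of_isDominant ⟨fun α hα => ?_, Or.inr ?_⟩
      · rw [abs_neg] at hα
        rw [xiMap_erase_of_abs_ne hi hα.ne, hr.1 α (hgt.trans hα)]
      · simp [xiMap_erase hi, xiMap_neg_s4, hr.1 _ hgt, CharZero.eq_neg_self_iff, hui]
    refine Or.inr ⟨by rw [hg, neg_bop_self], fun h => ?_⟩
    rw [h] at hgt
    exact lt_irrefl _ hgt
  by_cases hpos : Fop I u = 0 ∨ 0 < xiMap (I.erase i) u (Fop I u)
  · rw [fop_erase_eq_of_abs_le hi u hle hpos]
    rcases eq_or_ne (u i) (Fop I u) with hur | hur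
    · exact Or.inl (by rw [hur, bop_self])
    rcases hle.lt_or_eq with hlt | heq
    · exact Or.inl (bop_eq_left hlt)
    · have hneg : u i = -Fop I u := (abs_eq_abs.mp heq).resolve_left hur
      exact Or.inr ⟨by rw [hneg, bop_neg_self], hur⟩
  -- removing `u i` cancels `Fop I u` completely, so what is left lies strictly below it
  rw [not_or, not_lt] at hpos
  obtain ⟨hr0, hξ⟩ := hpos
  have hrpos : 0 < xiMap I u (Fop I u) := hr.2.resolve_left hr0
  have herase := xiMap_erase hi u (Fop I u)
  have hur : u i = Fop I u := by
    by_contra hur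
    rw [if_neg hur] at herase
    split_ifs at herase <;> omega
  have hur' : u i ≠ -Fop I u := by
    rw [hur]
    exact fun h => hr0 (by linarith)
  rw [if_pos hur, if_neg hur'] at herase
  left
  rw [hur]
  exact bop_eq_right (abs_fop_erase_lt hi hur hr0 (by omega))

lemma bop_fop_erase_eq_zero_or_eq (hi : i ∈ I) (u : ι → ℝ) :
    bop (Fop (I.erase i) u) (u i) = 0 ∨ bop (Fop (I.erase i) u) (u i) = Fop I u :=
  ((bop_fop_erase hi u).imp_right And.left).symm

lemma exists_bop_fop_erase_eq {u : ι → ℝ} (h : Fop I u ≠ 0) :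
    ∃ i ∈ I, bop (Fop (I.erase i) u) (u i) = Fop I u := by
  obtain ⟨i, hi, hur⟩ := exists_eq_of_xiMap_pos ((isDominant_fop I u).2.resolve_left h)
  exact ⟨i, hi, (bop_fop_erase hi u).resolve_right fun h' => h'.2 hur⟩

end Erase

lemma fop_fin_two (w : Fin 2 → ℝ) : Fop univ w = bop (w 0) (w 1) := by
  apply fop_eq_of_isDominant
  have hξ : ∀ α, xiMap univ w α = (if w 0 = α then 1 else 0) - (if w 0 = -α then 1 else 0) +
      ((if w 1 = α then 1 else 0) - (if w 1 = -α then 1 else 0)) := fun α => by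
    rw [xiMap_eq_sum, Fin.sum_univ_two]
  have habove : ∀ α, |w 0| < |α| → |w 1| < |α| → xiMap univ w α = 0 := fun α h₀ h₁ =>
    xiMap_eq_zero_of_forall_abs_ne (by simp [Fin.forall_fin_two, h₀.ne, h₁.ne])
  unfold bop
  split_ifs with h10 h01
  · have h₀ : w 0 ≠ 0 := abs_pos.mp ((abs_nonneg _).trans_lt h10)
    have h₁ : w 1 ≠ w 0 := fun h => h10.ne (by rw [h])
    have h₂ : w 1 ≠ -w 0 := fun h => h10.ne (by rw [h, abs_neg])
    refine ⟨fun α hα => habove α hα (h10.trans hα), Or.inr ?_⟩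
    simp [hξ, h₀, h₁, h₂, CharZero.eq_neg_self_iff]
  · have h₀ : w 1 ≠ 0 := abs_pos.mp ((abs_nonneg _).trans_lt h01)
    have h₁ : w 0 ≠ w 1 := fun h => h01.ne (by rw [h])
    have h₂ : w 0 ≠ -w 1 := fun h => h01.ne (by rw [h, abs_neg])
    refine ⟨fun α hα => habove α (h01.trans hα) hα, Or.inr ?_⟩
    simp [hξ, h₀, h₁, h₂, CharZero.eq_neg_self_iff]
  · rcases abs_eq_abs.mp (le_antisymm (not_lt.1 h01) (not_lt.1 h10)) with h | h
    · rw [h, add_self_div_two]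
      refine ⟨fun α hα => habove α hα (by rwa [h]), ?_⟩
      rcases eq_or_ne (w 0) 0 with h₀ | h₀
      · exact Or.inl h₀
      · simp [hξ, h, h₀, CharZero.eq_neg_self_iff]
    · rw [h, add_neg_cancel, zero_div]
      refine ⟨fun α _ => ?_, Or.inl rfl⟩
      simp only [hξ, h, neg_eq_iff_eq_neg, neg_neg]
      ring

lemma bop_eq_zero_or_eq {a b c : ℝ} (ha : a = 0 ∨ a = c) (hb : b = 0 ∨ b = c) :
    (bop a b = 0 ∨ bop a b = c) ∧ (a = c ∨ b = c → bop a b = c) := by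
  rcases ha with rfl | rfl <;> rcases hb with rfl | rfl <;>
    simp [bop_self, bop_zero_left, bop_zero_right]

lemma mem_of_bop_closed {ι : Type*} {n : ℕ} {Y : Set (Fin n → ℝ)}
    (hY : ∀ z ∈ Y, ∀ y ∈ Y, (fun k => bop (z k) (y k)) ∈ Y) (h0 : 0 ∈ Y)
    {s : Finset ι} {E : ι → Fin n → ℝ} {r : Fin n → ℝ} (hE : ∀ i ∈ s, E i ∈ Y)
    (hEr : ∀ i ∈ s, ∀ k, E i k = 0 ∨ E i k = r k)
    (hcover : ∀ k, r k ≠ 0 → ∃ i ∈ s, E i k = r k) : r ∈ Y := by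
  classical
  obtain ⟨z, hz, hzr⟩ :
      ∃ z ∈ Y, ∀ k, (z k = 0 ∨ z k = r k) ∧ ∀ i ∈ s, E i k = r k → z k = r k := by
    clear hcover
    induction s using Finset.induction_on with
    | empty => exact ⟨0, h0, fun k => ⟨Or.inl rfl, by simp⟩⟩
    | insert j s _ ih =>
      obtain ⟨z, hz, hzr⟩ := ih (fun i hi => hE i (mem_insert_of_mem hi))
        (fun i hi => hEr i (mem_insert_of_mem hi))
      refine ⟨fun k => bop (z k) (E j k), hY z hz _ (hE j (mem_insert_self j s)), fun k => ?_⟩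
      have hb := bop_eq_zero_or_eq (hzr k).1 (hEr j (mem_insert_self j s) k)
      refine ⟨hb.1, fun i hi hir => hb.2 ?_⟩
      rcases mem_insert.mp hi with rfl | hi
      · exact Or.inr hir
      · exact Or.inl ((hzr k).2 i hi hir)
  convert hz using 1
  funext k
  by_cases hrk : r k = 0
  · rcases (hzr k).1 with h | h <;> rw [h, hrk]
  · obtain ⟨i, hi, hir⟩ := hcover k hrk
    exact ((hzr k).2 i hi hir).symm

/-- idempotent symmetric subspaces are stable under m-ary combinations. -/
theorem stmt4 (n : ℕ) (Y : Set (Fin n → ℝ)) :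
    (∀ x ∈ Y, ∀ y ∈ Y, ∀ t : ℝ, (fun k => bop (x k) (t * y k)) ∈ Y) ↔
    (∀ m : ℕ, 1 ≤ m → ∀ x : Fin m → (Fin n → ℝ), (∀ i, x i ∈ Y) → ∀ t : Fin m → ℝ,
      (fun k => Fop Finset.univ (fun i => t i * x i k)) ∈ Y) := by
  constructor
  · intro hbin m hm x hx t
    have hzero : (0 : Fin n → ℝ) ∈ Y := by
      simpa [bop_neg_self, Pi.zero_def] using hbin _ (hx ⟨0, hm⟩) _ (hx ⟨0, hm⟩) (-1)
    have hclosed : ∀ z ∈ Y, ∀ y ∈ Y, (fun k => bop (z k) (y k)) ∈ Y := fun z hz y hy => by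
      simpa using hbin z hz y hy 1
    suffices ∀ s : Finset (Fin m), (fun k => Fop s fun i => t i * x i k) ∈ Y from this univ
    intro s
    induction s using Finset.strongInduction with
    | H s ih =>
      exact mem_of_bop_closed hclosed hzero
        (fun i hi => hbin _ (ih _ (erase_ssubset hi)) _ (hx i) (t i))
        (fun i hi k => bop_fop_erase_eq_zero_or_eq hi _)
        (fun k hk => exists_bop_fop_erase_eq hk)
  · intro hm x hx y hy t
    simpa [fop_fin_two] using hm 2 one_le_two ![x, y] (Fin.forall_fin_two.2 ⟨hx, hy⟩) ![1, t]
end
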